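/- arXiv:1801.03122 — 4 statements merged into one kernel-verified Lean document; each statement's English description precedes it below -/
import Mathlib

section
/- Let g : Θ → ℝ be measurable with ∫_Θ |g(θ)| dΠ(θ) < ∞. Then for μ-almost every (x, θ) ∈ X^∞ × Θ, the conditional expectations E_μ[g(θ) | X₁, …, Xₙ] (conditioning on the σ-algebra generated by the first n coordinates of x) converge, as n → ∞, to g(θ). -/
open MeasureTheory Filter Topology

open ProbabilityTheory

private lemma doob_marg_single {X Θ : Type*} [MeasurableSpace X] {P : Θ → Measure X}
    [∀ θ, IsProbabilityMeasure (P θ)] {Pinf : Θ → Measure (ℕ → X)}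
    (hPinf : ∀ (θ : Θ) (k : ℕ) (A : Fin k → Set X), (∀ i, MeasurableSet (A i)) →
      Pinf θ {x : ℕ → X | ∀ i : Fin k, x (i : ℕ) ∈ A i} = ∏ i, P θ (A i))
    (θ : Θ) (i : ℕ) {s : Set X} (hs : MeasurableSet s) :
    Pinf θ ((fun x : ℕ → X => x i) ⁻¹' s) = P θ s := by
  classical
  set B : Fin (i + 1) → Set X := fun l => if (l : ℕ) = i then s else Set.univ with hB
  have hBmeas : ∀ l, MeasurableSet (B l) := by
    intro l; dsimp [B]; split <;> [exact hs; exact MeasurableSet.univ]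
  have hset : {x : ℕ → X | ∀ l : Fin (i + 1), x (l : ℕ) ∈ B l}
      = (fun x : ℕ → X => x i) ⁻¹' s := by
    ext x
    simp only [Set.mem_setOf_eq, Set.mem_preimage, B]
    constructor
    · intro hx
      have := hx ⟨i, i.lt_succ_self⟩
      simpa using this
    · intro hx l
      by_cases h : (l : ℕ) = i
      · rw [if_pos h, h]; exact hx
      · rw [if_neg h]; trivial
  have hprod : ∀ l : Fin (i + 1), P θ (B l) = if l = Fin.last i then P θ s else 1 := by
    intro l
    dsimp [B]
    by_cases h : (l : ℕ) = i
    · rw [if_pos h, if_pos (by ext; simpa using h)]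
    · rw [if_neg h, if_neg (by intro hl; exact h (by rw [hl]; simp)), measure_univ]
  rw [← hset, hPinf θ (i + 1) B hBmeas, Finset.prod_congr rfl (fun l _ => hprod l),
    Finset.prod_ite_eq' Finset.univ (Fin.last i) (fun _ => P θ s), if_pos (Finset.mem_univ _)]

private lemma doob_marg_pair {X Θ : Type*} [MeasurableSpace X] {P : Θ → Measure X}
    [∀ θ, IsProbabilityMeasure (P θ)] {Pinf : Θ → Measure (ℕ → X)}
    (hPinf : ∀ (θ : Θ) (k : ℕ) (A : Fin k → Set X), (∀ i, MeasurableSet (A i)) →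
      Pinf θ {x : ℕ → X | ∀ i : Fin k, x (i : ℕ) ∈ A i} = ∏ i, P θ (A i))
    (θ : Θ) {i j : ℕ} (hij : i ≠ j) {s t : Set X}
    (hs : MeasurableSet s) (ht : MeasurableSet t) :
    Pinf θ ((fun x : ℕ → X => x i) ⁻¹' s ∩ (fun x : ℕ → X => x j) ⁻¹' t)
      = P θ s * P θ t := by
  classical
  set k : ℕ := max i j + 1 with hk
  have hik : i < k := Nat.lt_succ_of_le (le_max_left _ _)
  have hjk : j < k := Nat.lt_succ_of_le (le_max_right _ _)
  set i' : Fin k := ⟨i, hik⟩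
  set j' : Fin k := ⟨j, hjk⟩
  have hij' : i' ≠ j' := by
    intro h; exact hij (by simpa [i', j', Fin.ext_iff] using h)
  set B : Fin k → Set X := fun l => if (l : ℕ) = i then s else if (l : ℕ) = j then t else Set.univ
    with hB
  have hBmeas : ∀ l, MeasurableSet (B l) := by
    intro l; dsimp [B]
    split
    · exact hs
    · split
      · exact ht
      · exact MeasurableSet.univ
  have hset : {x : ℕ → X | ∀ l : Fin k, x (l : ℕ) ∈ B l}
      = (fun x : ℕ → X => x i) ⁻¹' s ∩ (fun x : ℕ → X => x j) ⁻¹' t := by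
    ext x
    simp only [Set.mem_setOf_eq, Set.mem_inter_iff, Set.mem_preimage, B]
    constructor
    · intro hx
      refine ⟨?_, ?_⟩
      · have := hx i'; simpa [i'] using this
      · have := hx j'
        rw [if_neg (by simpa [j'] using Ne.symm hij)] at this
        simpa [j'] using this
    · rintro ⟨hx1, hx2⟩ l
      by_cases h1 : (l : ℕ) = i
      · rw [if_pos h1, h1]; exact hx1
      · rw [if_neg h1]
        by_cases h2 : (l : ℕ) = j
        · rw [if_pos h2, h2]; exact hx2
        · rw [if_neg h2]; trivial
  have hprod : ∀ l : Fin k, P θ (B l)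
      = (if l = i' then P θ s else 1) * (if l = j' then P θ t else 1) := by
    intro l
    dsimp [B]
    by_cases h1 : (l : ℕ) = i
    · have hl : l = i' := by ext; simpa [i'] using h1
      rw [if_pos h1, if_pos hl, if_neg (by rw [hl]; exact hij'), mul_one]
    · have hl : l ≠ i' := by intro h; exact h1 (by rw [h])
      rw [if_neg h1, if_neg hl, one_mul]
      by_cases h2 : (l : ℕ) = j
      · have hl' : l = j' := by ext; simpa [j'] using h2
        rw [if_pos h2, if_pos hl']
      · have hl' : l ≠ j' := by intro h; exact h2 (by rw [h])
        rw [if_neg h2, if_neg hl', measure_univ]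
  rw [← hset, hPinf θ k B hBmeas, Finset.prod_congr rfl (fun l _ => hprod l),
    Finset.prod_mul_distrib,
    Finset.prod_ite_eq' Finset.univ i' (fun _ => P θ s),
    Finset.prod_ite_eq' Finset.univ j' (fun _ => P θ t),
    if_pos (Finset.mem_univ _), if_pos (Finset.mem_univ _)]

private lemma doob_slln {X Θ : Type*} [MeasurableSpace X] {P : Θ → Measure X}
    [∀ θ, IsProbabilityMeasure (P θ)] {Pinf : Θ → Measure (ℕ → X)}
    [∀ θ, IsProbabilityMeasure (Pinf θ)]
    (hPinf : ∀ (θ : Θ) (k : ℕ) (A : Fin k → Set X), (∀ i, MeasurableSet (A i)) →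
      Pinf θ {x : ℕ → X | ∀ i : Fin k, x (i : ℕ) ∈ A i} = ∏ i, P θ (A i))
    (θ : Θ) {At : Set X} (hAt : MeasurableSet At) :
    ∀ᵐ x ∂Pinf θ, Tendsto
      (fun n : ℕ => (n : ℝ)⁻¹ • ∑ i ∈ Finset.range n, At.indicator (1 : X → ℝ) (x i))
      atTop (𝓝 ((P θ At).toReal)) := by
  classical
  set Y : ℕ → (ℕ → X) → ℝ := fun i x => At.indicator (1 : X → ℝ) (x i) with hY
  have hYeq : ∀ i, Y i = ((fun x : ℕ → X => x i) ⁻¹' At).indicator (1 : (ℕ → X) → ℝ) := by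
    intro i
    funext x
    simp only [Y, Set.indicator]
    split_ifs with h1 h2 h2 <;> first | rfl | (exact absurd h1 h2) | (exact absurd h2 h1)
  have hmap : ∀ i, (Pinf θ).map (fun x : ℕ → X => x i) = P θ := by
    intro i
    refine Measure.ext fun u hu => ?_
    rw [Measure.map_apply (measurable_pi_apply i) hu, doob_marg_single hPinf θ i hu]
  have hint : Integrable (Y 0) (Pinf θ) := by
    rw [hYeq 0]
    exact (integrable_const (1 : ℝ)).indicator ((measurable_pi_apply 0) hAt)
  have hindep : Pairwise (Function.onFun (IndepFun · · (Pinf θ)) Y) := by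
    intro i j hij
    have hco : IndepFun (fun x : ℕ → X => x i) (fun x : ℕ → X => x j) (Pinf θ) := by
      rw [indepFun_iff_measure_inter_preimage_eq_mul]
      intro s t hs ht
      rw [doob_marg_pair hPinf θ hij hs ht, ← doob_marg_single hPinf θ i hs,
        ← doob_marg_single hPinf θ j ht]
    exact hco.comp (measurable_const.indicator hAt) (measurable_const.indicator hAt)
  have hident : ∀ i, IdentDistrib (Y i) (Y 0) (Pinf θ) (Pinf θ) := by
    intro i
    have hco : IdentDistrib (fun x : ℕ → X => x i) (fun x : ℕ → X => x 0)
        (Pinf θ) (Pinf θ) :=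
      ⟨(measurable_pi_apply i).aemeasurable, (measurable_pi_apply 0).aemeasurable,
        by rw [hmap i, hmap 0]⟩
    exact hco.comp (measurable_const.indicator hAt)
  have hmean : (Pinf θ)[Y 0] = (P θ At).toReal := by
    rw [hYeq 0, integral_indicator_one ((measurable_pi_apply 0) hAt), Measure.real,
      doob_marg_single hPinf θ 0 hAt]
  have := strong_law_ae Y hint hindep hident
  rw [hmean] at this
  exact this

/-- **Doob's theorem for estimators.** If `g : Θ → ℝ` is measurable with
`∫ |g| dΠ < ∞`, then for `μ`-almost every `(x, θ)`, the conditional expectations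
`E_μ[g(θ) | X₁, …, Xₙ]` (conditioning on the σ-algebra generated by the first `n`
coordinates) converge to `g(θ)` as `n → ∞`. -/
theorem doob_estimators
    {X Θ : Type*} [MeasurableSpace X] [StandardBorelSpace X]
    [MeasurableSpace Θ] [StandardBorelSpace Θ]
    -- the measurable family (Markov kernel) of sampling distributions
    (P : Θ → Measure X) [∀ θ, IsProbabilityMeasure (P θ)]
    (hP : ∀ A : Set X, MeasurableSet A → Measurable fun θ => P θ A)
    -- identifiability
    (hident : ∀ θ θ' : Θ, θ ≠ θ' → P θ ≠ P θ')
    -- the prior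
    (prior : Measure Θ) [IsProbabilityMeasure prior]
    -- the i.i.d. product measures `P_θ^∞`
    (Pinf : Θ → Measure (ℕ → X)) [∀ θ, IsProbabilityMeasure (Pinf θ)]
    (hPinf : ∀ (θ : Θ) (k : ℕ) (A : Fin k → Set X), (∀ i, MeasurableSet (A i)) →
      Pinf θ {x : ℕ → X | ∀ i : Fin k, x (i : ℕ) ∈ A i} = ∏ i, P θ (A i))
    -- the joint distribution `μ` of `((X₁, X₂, …), θ)`
    (μ : Measure ((ℕ → X) × Θ)) [IsProbabilityMeasure μ]
    (hμ : ∀ E : Set ((ℕ → X) × Θ), MeasurableSet E →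
      μ E = ∫⁻ θ, Pinf θ {x | (x, θ) ∈ E} ∂prior)
    (g : Θ → ℝ) (hgmeas : Measurable g) (hgint : Integrable g prior) :
    ∀ᵐ p ∂μ, Tendsto
      (fun n : ℕ =>
        (μ[fun q : (ℕ → X) × Θ => g q.2 |
          MeasurableSpace.comap (fun q : (ℕ → X) × Θ => fun i : Fin n => q.1 i)
            inferInstance]) p)
      atTop (𝓝 (g p.2)) := by
  classical
  have hΘ : Nonempty Θ := by
    rcases isEmpty_or_nonempty Θ with hΘ | hΘ
    · exfalso
      have h1 : prior Set.univ = 1 := measure_univ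
      rw [Set.univ_eq_empty_iff.mpr hΘ, measure_empty] at h1
      exact zero_ne_one h1
    · exact hΘ
  -- countable π-system generating the σ-algebra of X
  obtain ⟨s, hs_range⟩ := (MeasurableSpace.countable_countableGeneratingSet (α := X)).exists_eq_range
    (MeasurableSpace.nonempty_countableGeneratingSet (α := X))
  set A : Finset ℕ → Set X := fun t => ⋂ i ∈ t, s i with hA
  have hsmeas : ∀ i, MeasurableSet (s i) := fun i =>
    MeasurableSpace.measurableSet_countableGeneratingSet (by rw [hs_range]; exact ⟨i, rfl⟩)
  have hAmeas : ∀ t, MeasurableSet (A t) := fun t =>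
    MeasurableSet.biInter t.countable_toSet fun i _ => hsmeas i
  have hApi : IsPiSystem (Set.range A) := by
    rintro u ⟨t, rfl⟩ v ⟨t', rfl⟩ -
    refine ⟨t ∪ t', ?_⟩
    ext x
    simp [A, Finset.mem_union, or_imp, forall_and]
  have hAgen : MeasurableSpace.generateFrom (Set.range A) = (inferInstance : MeasurableSpace X) := by
    refine le_antisymm (MeasurableSpace.generateFrom_le ?_) ?_
    · rintro u ⟨t, rfl⟩; exact hAmeas t
    · conv_lhs => rw [← MeasurableSpace.generateFrom_countableGeneratingSet (α := X)]
      refine MeasurableSpace.generateFrom_le fun u hu => ?_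
      rw [hs_range] at hu
      obtain ⟨n, rfl⟩ := hu
      exact MeasurableSpace.measurableSet_generateFrom ⟨{n}, by simp [A]⟩
  -- the injective measurable map θ ↦ (P θ (A t))_t
  set h : Θ → Finset ℕ → ENNReal := fun θ t => P θ (A t) with hh
  have hhmeas : Measurable h := measurable_pi_lambda _ fun t => hP _ (hAmeas t)
  have hhinj : Function.Injective h := by
    intro θ θ' he
    by_contra hne
    refine hident θ θ' hne ?_
    refine MeasureTheory.ext_of_generate_finite _ hAgen.symm hApi ?_ (by simp)
    rintro u ⟨t, rfl⟩
    exact congrFun he t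
  obtain ⟨r, hrmeas, hr⟩ := (hhmeas.measurableEmbedding hhinj).exists_measurable_extend
    measurable_id (fun _ => hΘ)
  -- the empirical frequencies
  set F : (ℕ → X) → Finset ℕ → ENNReal := fun x t => atTop.liminf fun n : ℕ =>
    ENNReal.ofReal ((n : ℝ)⁻¹ • ∑ i ∈ Finset.range n, (A t).indicator (1 : X → ℝ) (x i))
    with hF
  have hFmeas : Measurable F := by
    refine measurable_pi_lambda _ fun t => Measurable.liminf fun n => ?_
    refine ENNReal.measurable_ofReal.comp (Measurable.const_smul ?_ ((n : ℝ)⁻¹))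
    exact Finset.measurable_sum _ fun i _ =>
      (measurable_const.indicator (hAmeas t)).comp (measurable_pi_apply i)
  have hFae : ∀ θ, ∀ᵐ x ∂Pinf θ, F x = h θ := by
    intro θ
    have hall : ∀ᵐ x ∂Pinf θ, ∀ t : Finset ℕ, F x t = h θ t := by
      rw [ae_all_iff]
      intro t
      filter_upwards [doob_slln hPinf θ (hAmeas t)] with x hx
      have h2 : Tendsto
          (fun n : ℕ => ENNReal.ofReal
            ((n : ℝ)⁻¹ • ∑ i ∈ Finset.range n, (A t).indicator (1 : X → ℝ) (x i)))
          atTop (𝓝 (ENNReal.ofReal ((P θ (A t)).toReal))) :=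
        (ENNReal.continuous_ofReal.tendsto _).comp hx
      have h3 : F x t = ENNReal.ofReal ((P θ (A t)).toReal) := h2.liminf_eq
      rw [h3, ENNReal.ofReal_toReal (measure_ne_top _ _)]
    filter_upwards [hall] with x hx
    funext t
    exact hx t
  -- a.e. recovery of the parameter
  have hEmeas : MeasurableSet {q : (ℕ → X) × Θ | F q.1 = h q.2} := by
    exact StronglyMeasurable.measurableSet_eq_fun
      ((hFmeas.comp measurable_fst).stronglyMeasurable)
      ((hhmeas.comp measurable_snd).stronglyMeasurable)
  have hae : ∀ᵐ q ∂μ, F q.1 = h q.2 := by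
    rw [ae_iff,
      show {a : (ℕ → X) × Θ | ¬F a.1 = h a.2} = {q : (ℕ → X) × Θ | F q.1 = h q.2}ᶜ from rfl,
      hμ _ hEmeas.compl]
    have hz : ∀ θ, Pinf θ {x | (x, θ) ∈ {q : (ℕ → X) × Θ | F q.1 = h q.2}ᶜ} = 0 := by
      intro θ
      have := hFae θ
      rw [ae_iff] at this
      exact this
    simp only [hz, lintegral_zero]
  have hae2 : (fun q : (ℕ → X) × Θ => g q.2) =ᵐ[μ] fun q => g (r (F q.1)) := by
    filter_upwards [hae] with q hq
    rw [hq]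
    have : r (h q.2) = q.2 := congrFun hr q.2
    rw [this]
  -- the filtration
  set ℱ : Filtration ℕ (inferInstance : MeasurableSpace ((ℕ → X) × Θ)) :=
    { seq := fun n => MeasurableSpace.comap
        (fun q : (ℕ → X) × Θ => fun i : Fin n => q.1 i) inferInstance
      mono' := fun n m hnm => by
        show MeasurableSpace.comap (fun q : (ℕ → X) × Θ => fun i : Fin n => q.1 i) inferInstance
          ≤ MeasurableSpace.comap (fun q : (ℕ → X) × Θ => fun i : Fin m => q.1 i) inferInstance
        have heq : (fun q : (ℕ → X) × Θ => fun i : Fin n => q.1 i)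
            = (fun v : Fin m → X => fun i : Fin n => v (Fin.castLE hnm i))
              ∘ (fun q : (ℕ → X) × Θ => fun i : Fin m => q.1 i) := rfl
        rw [heq, ← MeasurableSpace.comap_comp]
        exact MeasurableSpace.comap_mono
          (measurable_pi_lambda _ fun i => measurable_pi_apply _).comap_le
      le' := fun n => by
        show MeasurableSpace.comap (fun q : (ℕ → X) × Θ => fun i : Fin n => q.1 i) inferInstance
          ≤ _
        exact (measurable_pi_lambda
          (fun q : (ℕ → X) × Θ => fun i : Fin n => q.1 i) fun i =>
          (measurable_pi_apply (i : ℕ)).comp measurable_fst).comap_le } with hℱ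
  have hmeas_sup : Measurable[⨆ n, ℱ n] fun q : (ℕ → X) × Θ => q.1 := by
    refine @measurable_pi_lambda _ _ _ (⨆ n, ℱ n) _ _ fun i => ?_
    have h1 : Measurable[ℱ (i + 1)] (fun q : (ℕ → X) × Θ => fun l : Fin (i + 1) => q.1 l) :=
      Measurable.of_comap_le le_rfl
    have h2 : Measurable[ℱ (i + 1)] (fun q : (ℕ → X) × Θ => q.1 i) :=
      (measurable_pi_apply (⟨i, i.lt_succ_self⟩ : Fin (i + 1))).comp h1
    exact h2.mono (le_iSup _ (i + 1)) le_rfl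
  set g' : (ℕ → X) × Θ → ℝ := fun q => g (r (F q.1)) with hg'
  have hg'sm : StronglyMeasurable[⨆ n, ℱ n] g' :=
    ((hgmeas.comp (hrmeas.comp hFmeas)).comp hmeas_sup).stronglyMeasurable
  -- integrability
  have hmap_snd : μ.map Prod.snd = prior := by
    refine Measure.ext fun u hu => ?_
    rw [Measure.map_apply measurable_snd hu, hμ _ (measurable_snd hu)]
    have hslice : ∀ θ, Pinf θ {x : ℕ → X | (x, θ) ∈ Prod.snd ⁻¹' u}
        = u.indicator (1 : Θ → ENNReal) θ := by
      intro θ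
      by_cases hthet : θ ∈ u
      · simp only [Set.mem_preimage, Set.indicator_of_mem hthet, Pi.one_apply]
        have : {x : ℕ → X | θ ∈ u} = Set.univ := Set.eq_univ_of_forall fun _ => hthet
        rw [this, measure_univ]
      · simp only [Set.mem_preimage, Set.indicator_of_notMem hthet]
        have : {x : ℕ → X | θ ∈ u} = ∅ := by
          ext x; simp [hthet]
        rw [this, measure_empty]
    simp only [hslice]
    rw [lintegral_indicator_one hu]
  have hgint2 : Integrable (fun q : (ℕ → X) × Θ => g q.2) μ := by
    have h1 : Integrable g (μ.map Prod.snd) := by rw [hmap_snd]; exact hgint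
    exact (integrable_map_measure hgmeas.aestronglyMeasurable
      measurable_snd.aemeasurable).mp h1
  have hg'int : Integrable g' μ := hgint2.congr hae2
  -- Lévy's upward martingale convergence
  have hconv := hg'int.tendsto_ae_condExp hg'sm
  have hce : ∀ n, (μ[fun q : (ℕ → X) × Θ => g q.2 | ℱ n]) =ᵐ[μ] μ[g' | ℱ n] :=
    fun n => condExp_congr_ae hae2
  filter_upwards [hconv, ae_all_iff.mpr hce, hae2] with q hq1 hq2 hq3
  have hgq : g' q = g q.2 := hq3.symm
  rw [← hgq]
  exact Tendsto.congr (fun n => (hq2 n).symm) hq1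
end

section
/- Let g : Θ → ℝ be measurable with ∫_Θ |g(θ)| dΠ(θ) < ∞. Then there exists a measurable set Θ₀ ⊆ Θ with Π(Θ₀) = 1 such that for every θ₀ ∈ Θ₀: for P_{θ₀}^∞-almost every x ∈ X^∞, the conditional expectations E_μ[g(θ) | X₁, …, Xₙ] (computed under the joint measure μ, conditioning on the σ-algebra generated by the first n coordinates) evaluated at x converge, as n → ∞, to g(θ₀). -/
open MeasureTheory Filter Topology

namespace DoobFrequentistAux

variable {X : Type*} [MeasurableSpace X]

lemma box_single (i : ℕ) (A : Set X) :
    {x : ℕ → X | ∀ j : Fin (i + 1), x (j : ℕ) ∈ (if (j : ℕ) = i then A else Set.univ)}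
      = (fun x : ℕ → X => x i) ⁻¹' A := by
  ext x
  simp only [Set.mem_setOf_eq, Set.mem_preimage]
  constructor
  · intro h
    have := h ⟨i, Nat.lt_succ_self i⟩
    simpa using this
  · intro hx j
    by_cases hj : (j : ℕ) = i
    · rw [if_pos hj, hj]; exact hx
    · rw [if_neg hj]; trivial

lemma prod_single (Pm : Set X → ENNReal) (huniv : Pm Set.univ = 1) (i : ℕ) (A : Set X) :
    (∏ j : Fin (i + 1), Pm (if (j : ℕ) = i then A else Set.univ)) = Pm A := by
  rw [Finset.prod_eq_single (⟨i, Nat.lt_succ_self i⟩ : Fin (i + 1))]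
  · simp
  · intro b _ hb
    have hbi : (b : ℕ) ≠ i := fun h => hb (Fin.ext h)
    simp [hbi, huniv]
  · simp

lemma box_pair (i j : ℕ) (hij : i ≠ j) (A B : Set X) :
    {x : ℕ → X | ∀ l : Fin (max i j + 1), x (l : ℕ) ∈
        (if (l : ℕ) = i then A else if (l : ℕ) = j then B else Set.univ)}
      = (fun x : ℕ → X => x i) ⁻¹' A ∩ (fun x : ℕ → X => x j) ⁻¹' B := by
  ext x
  simp only [Set.mem_setOf_eq, Set.mem_inter_iff, Set.mem_preimage]
  constructor
  · intro h
    refine ⟨?_, ?_⟩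
    · have := h ⟨i, Nat.lt_succ_of_le (le_max_left i j)⟩
      simpa using this
    · have := h ⟨j, Nat.lt_succ_of_le (le_max_right i j)⟩
      simpa [(Ne.symm hij : j ≠ i)] using this
  · rintro ⟨h1, h2⟩ l
    by_cases h : (l : ℕ) = i
    · rw [if_pos h, h]; exact h1
    · rw [if_neg h]
      by_cases h' : (l : ℕ) = j
      · rw [if_pos h', h']; exact h2
      · rw [if_neg h']; trivial

lemma prod_pair (Pm : Set X → ENNReal) (huniv : Pm Set.univ = 1) (i j : ℕ) (hij : i ≠ j)
    (A B : Set X) :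
    (∏ l : Fin (max i j + 1),
        Pm (if (l : ℕ) = i then A else if (l : ℕ) = j then B else Set.univ))
      = Pm A * Pm B := by
  have hi : i < max i j + 1 := Nat.lt_succ_of_le (le_max_left i j)
  have hj : j < max i j + 1 := Nat.lt_succ_of_le (le_max_right i j)
  set i' : Fin (max i j + 1) := ⟨i, hi⟩ with hi'
  set j' : Fin (max i j + 1) := ⟨j, hj⟩ with hj'
  have hij' : i' ≠ j' := by
    intro h
    exact hij (congrArg Fin.val h)
  have hone : ∀ l ∈ (Finset.univ : Finset (Fin (max i j + 1))),
      l ∉ ({i', j'} : Finset (Fin (max i j + 1))) →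
      Pm (if (l : ℕ) = i then A else if (l : ℕ) = j then B else Set.univ) = 1 := by
      intro l _ hl
      have hli : l ≠ i' := fun h => hl (by rw [h]; exact Finset.mem_insert_self _ _)
      have hlj : l ≠ j' := fun h => hl (by
        rw [h]; exact Finset.mem_insert_of_mem (Finset.mem_singleton_self _))
      have h1 : (l : ℕ) ≠ i := fun h => hli (Fin.ext (by rw [hi']; exact h))
      have h2 : (l : ℕ) ≠ j := fun h => hlj (Fin.ext (by rw [hj']; exact h))
      simp [h1, h2, huniv]
  rw [← Finset.prod_subset (Finset.subset_univ _) hone, Finset.prod_pair hij']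
  simp [hi', hj', (Ne.symm hij : j ≠ i)]

/-- A countable generating sequence of measurable sets whose range is a π-system. -/
lemma exists_gen_seq (X : Type*) [m : MeasurableSpace X] [MeasurableSpace.CountablyGenerated X] :
    ∃ e : ℕ → Set X, (∀ k, MeasurableSet (e k)) ∧ IsPiSystem (Set.range e) ∧
      MeasurableSpace.generateFrom (Set.range e) = m := by
  classical
  set t := MeasurableSpace.natGeneratingSequence X with ht
  set F : Finset ℕ → Set X := fun s => ⋂ i ∈ (s : Set ℕ), t i with hF
  have hFmeas : ∀ s : Finset ℕ, MeasurableSet (F s) := fun s =>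
    MeasurableSet.biInter s.countable_toSet
      (fun i _ => MeasurableSpace.measurableSet_natGeneratingSequence i)
  have hFinter : ∀ s s' : Finset ℕ, F s ∩ F s' = F (s ∪ s') := by
    intro s s'
    rw [hF]
    simp only [Finset.coe_union, Set.biInter_union]
  refine ⟨fun n => F ((Denumerable.eqv (Finset ℕ)).symm n), fun n => hFmeas _, ?_, ?_⟩
  · rintro u ⟨n, rfl⟩ v ⟨n', rfl⟩ -
    refine ⟨(Denumerable.eqv (Finset ℕ))
      ((Denumerable.eqv (Finset ℕ)).symm n ∪ (Denumerable.eqv (Finset ℕ)).symm n'), ?_⟩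
    simp only [Equiv.symm_apply_apply]
    exact (hFinter _ _).symm
  · refine le_antisymm (MeasurableSpace.generateFrom_le ?_) ?_
    · rintro u ⟨n, rfl⟩
      exact hFmeas _
    · rw [← MeasurableSpace.generateFrom_natGeneratingSequence X]
      refine MeasurableSpace.generateFrom_le ?_
      rintro u ⟨i, rfl⟩
      refine MeasurableSpace.measurableSet_generateFrom ⟨(Denumerable.eqv (Finset ℕ)) {i}, ?_⟩
      simp only [Equiv.symm_apply_apply]
      simp [hF, ht]

end DoobFrequentistAux

open DoobFrequentistAux

/-- **Doob's theorem for estimators, frequentist form.** There is a set `Θ₀` of prior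
probability 1 such that for every `θ₀ ∈ Θ₀`, for `P_{θ₀}^∞`-almost every data sequence `x`,
the conditional expectations `E_μ[g(θ) | X₁, …, Xₙ]` (computed under the joint measure `μ`)
evaluated at `x` converge to `g(θ₀)`. -/
theorem doob_estimators_frequentist
    {X Θ : Type*} [MeasurableSpace X] [StandardBorelSpace X]
    [MeasurableSpace Θ] [StandardBorelSpace Θ]
    (P : Θ → Measure X) [∀ θ, IsProbabilityMeasure (P θ)]
    (hP : ∀ A : Set X, MeasurableSet A → Measurable fun θ => P θ A)
    (hident : ∀ θ θ' : Θ, θ ≠ θ' → P θ ≠ P θ')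
    (prior : Measure Θ) [IsProbabilityMeasure prior]
    (Pinf : Θ → Measure (ℕ → X)) [∀ θ, IsProbabilityMeasure (Pinf θ)]
    (hPinf : ∀ (θ : Θ) (k : ℕ) (A : Fin k → Set X), (∀ i, MeasurableSet (A i)) →
      Pinf θ {x : ℕ → X | ∀ i : Fin k, x (i : ℕ) ∈ A i} = ∏ i, P θ (A i))
    (μ : Measure ((ℕ → X) × Θ)) [IsProbabilityMeasure μ]
    (hμ : ∀ E : Set ((ℕ → X) × Θ), MeasurableSet E →
      μ E = ∫⁻ θ, Pinf θ {x | (x, θ) ∈ E} ∂prior)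
    (g : Θ → ℝ) (hgmeas : Measurable g) (hgint : Integrable g prior) :
    ∃ Θ₀ : Set Θ, MeasurableSet Θ₀ ∧ prior Θ₀ = 1 ∧
      ∀ θ₀ ∈ Θ₀, ∀ᵐ x ∂(Pinf θ₀), Tendsto
        (fun n : ℕ =>
          (μ[fun q : (ℕ → X) × Θ => g q.2 |
            MeasurableSpace.comap (fun q : (ℕ → X) × Θ => fun i : Fin n => q.1 i)
              inferInstance]) (x, θ₀))
        atTop (𝓝 (g θ₀)) := by
  classical
  obtain ⟨e, he, hepi, hegen⟩ := exists_gen_seq X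
  -- one-coordinate marginals of `Pinf θ`
  have hcoord : ∀ (θ : Θ) (i : ℕ) (A : Set X), MeasurableSet A →
      Pinf θ ((fun x : ℕ → X => x i) ⁻¹' A) = P θ A := by
    intro θ i A hA
    rw [← box_single i A, hPinf θ (i + 1) _ (fun j => by
      show MeasurableSet (if (j : ℕ) = i then A else Set.univ)
      split_ifs
      exacts [hA, MeasurableSet.univ])]
    exact prod_single (fun s => P θ s) (measure_univ) i A
  -- two-coordinate marginals of `Pinf θ`
  have hpair : ∀ (θ : Θ) (i j : ℕ), i ≠ j → ∀ (A B : Set X), MeasurableSet A → MeasurableSet B →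
      Pinf θ ((fun x : ℕ → X => x i) ⁻¹' A ∩ (fun x : ℕ → X => x j) ⁻¹' B)
        = P θ A * P θ B := by
    intro θ i j hij A B hA hB
    rw [← box_pair i j hij A B, hPinf θ (max i j + 1) _ (fun l => by
      show MeasurableSet (if (l : ℕ) = i then A else if (l : ℕ) = j then B else Set.univ)
      split_ifs
      exacts [hA, hB, MeasurableSet.univ])]
    exact prod_pair (fun s => P θ s) (measure_univ) i j hij A B
  -- pairwise independence of the coordinates
  have hindepcoord : ∀ (θ : Θ) (i j : ℕ), i ≠ j →
      ProbabilityTheory.IndepFun (fun x : ℕ → X => x i) (fun x : ℕ → X => x j) (Pinf θ) := by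
    intro θ i j hij
    rw [ProbabilityTheory.indepFun_iff_measure_inter_preimage_eq_mul]
    intro s t hs ht
    rw [hpair θ i j hij s t hs ht, hcoord θ i s hs, hcoord θ j t ht]
  -- the SLLN: a.e. recovery of `P θ (e k)` from the data
  set ψ : (ℕ → X) → ℕ → ENNReal := fun x k =>
    limsup (fun n : ℕ =>
      ENNReal.ofReal ((∑ i ∈ Finset.range n, (e k).indicator (fun _ => (1 : ℝ)) (x i)) / n))
      atTop with hψ
  have hψm : Measurable ψ := by
    refine measurable_pi_lambda _ fun k => Measurable.limsup fun n => ?_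
    exact ENNReal.measurable_ofReal.comp
      ((Finset.measurable_sum _ fun i _ =>
        (measurable_const.indicator (he k)).comp (measurable_pi_apply i)).div_const _)
  set Φ : Θ → ℕ → ENNReal := fun θ k => P θ (e k) with hΦ
  have hΦm : Measurable Φ := measurable_pi_lambda _ fun k => hP _ (he k)
  have hΦinj : Function.Injective Φ := by
    intro θ θ' h
    by_contra hne
    refine hident θ θ' hne ?_
    refine ext_of_generate_finite (Set.range e) hegen.symm hepi ?_ (by simp)
    rintro s ⟨k, rfl⟩
    exact congrFun h k
  have hψΦ : ∀ θ : Θ, ∀ᵐ x ∂(Pinf θ), ψ x = Φ θ := by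
    intro θ
    have hk : ∀ k : ℕ, ∀ᵐ x ∂(Pinf θ), ψ x k = Φ θ k := by
      intro k
      set Y : ℕ → (ℕ → X) → ℝ := fun i x => (e k).indicator (fun _ => (1 : ℝ)) (x i) with hY
      have hYeq : ∀ i, Y i = ((fun x : ℕ → X => x i) ⁻¹' (e k)).indicator (fun _ => (1 : ℝ)) := by
        intro i
        funext x
        simp [hY, Set.indicator_apply, Set.mem_preimage]
      have hYint : Integrable (Y 0) (Pinf θ) := by
        rw [hYeq 0]
        exact (integrable_const (1 : ℝ)).indicator ((measurable_pi_apply 0) (he k))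
      have hYindep : Pairwise (Function.onFun (ProbabilityTheory.IndepFun · · (Pinf θ)) Y) := by
        intro i j hij
        exact (hindepcoord θ i j hij).comp
          (measurable_const.indicator (he k)) (measurable_const.indicator (he k))
      have hYident : ∀ i, ProbabilityTheory.IdentDistrib (Y i) (Y 0) (Pinf θ) (Pinf θ) := by
        intro i
        have hid : ProbabilityTheory.IdentDistrib (fun x : ℕ → X => x i)
            (fun x : ℕ → X => x 0) (Pinf θ) (Pinf θ) := by
          refine ⟨(measurable_pi_apply i).aemeasurable, (measurable_pi_apply 0).aemeasurable, ?_⟩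
          refine Measure.ext fun A hA => ?_
          rw [Measure.map_apply (measurable_pi_apply i) hA,
            Measure.map_apply (measurable_pi_apply 0) hA, hcoord θ i A hA, hcoord θ 0 A hA]
        exact hid.comp (measurable_const.indicator (he k))
      have hslln := ProbabilityTheory.strong_law_ae_real Y hYint hYindep hYident
      have hint : (∫ x, Y 0 x ∂(Pinf θ)) = (P θ (e k)).toReal := by
        rw [hYeq 0, integral_indicator_const (1 : ℝ) ((measurable_pi_apply 0) (he k)),
          measureReal_def, hcoord θ 0 (e k) (he k), smul_eq_mul, mul_one]
      filter_upwards [hslln] with x hx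
      have hx' : Tendsto (fun n : ℕ =>
          ENNReal.ofReal ((∑ i ∈ Finset.range n, (e k).indicator (fun _ => (1 : ℝ)) (x i)) / n))
          atTop (𝓝 (ENNReal.ofReal ((P θ (e k)).toReal))) := by
        rw [← hint]
        exact (ENNReal.continuous_ofReal.tendsto _).comp hx
      have : ψ x k = ENNReal.ofReal ((P θ (e k)).toReal) := hx'.limsup_eq
      rw [this, ENNReal.ofReal_toReal (measure_ne_top _ _)]
    filter_upwards [ae_all_iff.mpr hk] with x hx
    exact funext hx
  -- measurable extension of `g` through `Φ`
  have hΦemb : MeasurableEmbedding Φ := hΦm.measurableEmbedding hΦinj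
  obtain ⟨G, hGm, hGΦ⟩ := hΦemb.exists_measurable_extend hgmeas (fun _ => ⟨0⟩)
  -- the filtration of the first `n` coordinates
  set ℱ : Filtration ℕ (inferInstance : MeasurableSpace ((ℕ → X) × Θ)) :=
    { seq := fun n => MeasurableSpace.comap
        (fun q : (ℕ → X) × Θ => fun i : Fin n => q.1 i) inferInstance
      mono' := by
        intro n m hnm
        show MeasurableSpace.comap
            (fun q : (ℕ → X) × Θ => fun i : Fin n => q.1 i) inferInstance
          ≤ MeasurableSpace.comap
            (fun q : (ℕ → X) × Θ => fun i : Fin m => q.1 i) inferInstance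
        have hcomp : (fun q : (ℕ → X) × Θ => fun i : Fin n => q.1 i)
            = (fun (f : Fin m → X) (i : Fin n) => f (Fin.castLE hnm i)) ∘
              (fun q : (ℕ → X) × Θ => fun i : Fin m => q.1 i) := rfl
        rw [hcomp, ← MeasurableSpace.comap_comp]
        exact MeasurableSpace.comap_mono
          (measurable_iff_comap_le.mp
            (measurable_pi_lambda _ fun i => measurable_pi_apply _))
      le' := fun n => measurable_iff_comap_le.mp
        (measurable_pi_lambda _ fun i => (measurable_pi_apply ((i : ℕ))).comp measurable_fst) }
    with hℱ
  set gq : (ℕ → X) × Θ → ℝ := fun q => g q.2 with hgq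
  set g' : (ℕ → X) × Θ → ℝ := fun q => G (ψ q.1) with hg'
  -- `g'` is measurable w.r.t. `⨆ n, ℱ n`
  have hfstle : MeasurableSpace.comap (Prod.fst : (ℕ → X) × Θ → (ℕ → X)) inferInstance
      ≤ ⨆ n, (ℱ n : MeasurableSpace ((ℕ → X) × Θ)) := by
    have hpi : (inferInstance : MeasurableSpace (ℕ → X))
        = ⨆ i : ℕ, MeasurableSpace.comap (fun x : ℕ → X => x i) inferInstance := rfl
    rw [hpi, MeasurableSpace.comap_iSup]
    refine iSup_le fun i => ?_
    rw [MeasurableSpace.comap_comp]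
    have hcomp : ((fun x : ℕ → X => x i) ∘ (Prod.fst : (ℕ → X) × Θ → (ℕ → X)))
        = (fun f : Fin (i + 1) → X => f ⟨i, Nat.lt_succ_self i⟩) ∘
          (fun q : (ℕ → X) × Θ => fun j : Fin (i + 1) => q.1 j) := rfl
    rw [hcomp, ← MeasurableSpace.comap_comp]
    refine le_trans (MeasurableSpace.comap_mono
      (measurable_iff_comap_le.mp (measurable_pi_apply _))) ?_
    exact le_iSup (fun n => (ℱ n : MeasurableSpace ((ℕ → X) × Θ))) (i + 1)
  have hfstm : @Measurable _ _ (MeasurableSpace.comap (Prod.fst : (ℕ → X) × Θ → (ℕ → X))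
      inferInstance) _ (Prod.fst : (ℕ → X) × Θ → (ℕ → X)) := measurable_iff_comap_le.mpr le_rfl
  have hg'supmeas : @Measurable _ _ (⨆ n, (ℱ n : MeasurableSpace ((ℕ → X) × Θ))) _ g' :=
    ((hGm.comp hψm).comp hfstm).mono hfstle le_rfl
  -- `g' = gq` a.e. w.r.t. `μ`
  have hDmeas : MeasurableSet {q : (ℕ → X) × Θ | ψ q.1 = Φ q.2} := by
    have hset : {q : (ℕ → X) × Θ | ψ q.1 = Φ q.2}
        = ⋂ k : ℕ, ({q : (ℕ → X) × Θ | ψ q.1 k ≤ Φ q.2 k} ∩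
            {q : (ℕ → X) × Θ | Φ q.2 k ≤ ψ q.1 k}) := by
      ext q
      simp [funext_iff, le_antisymm_iff, forall_and, Pi.le_def]
    rw [hset]
    refine MeasurableSet.iInter fun k => MeasurableSet.inter ?_ ?_
    · exact measurableSet_le ((measurable_pi_apply k).comp (hψm.comp measurable_fst))
        ((measurable_pi_apply k).comp (hΦm.comp measurable_snd))
    · exact measurableSet_le ((measurable_pi_apply k).comp (hΦm.comp measurable_snd))
        ((measurable_pi_apply k).comp (hψm.comp measurable_fst))
  have hDnull : μ {q : (ℕ → X) × Θ | ψ q.1 = Φ q.2}ᶜ = 0 := by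
    rw [hμ _ hDmeas.compl]
    have hz : ∀ θ : Θ, Pinf θ {x : ℕ → X | (x, θ) ∈ {q : (ℕ → X) × Θ | ψ q.1 = Φ q.2}ᶜ} = 0 := by
      intro θ
      have h := hψΦ θ
      rw [ae_iff] at h
      exact h
    rw [lintegral_congr hz, lintegral_zero]
  have haeψΦ : ∀ᵐ q ∂μ, ψ q.1 = Φ q.2 := by
    rw [ae_iff]
    exact hDnull
  have hae : g' =ᵐ[μ] gq := by
    filter_upwards [haeψΦ] with q hq
    rw [hg', hgq]
    simp only
    rw [hq]
    exact congrFun hGΦ q.2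
  -- integrability
  have hmapsnd : μ.map Prod.snd = prior := by
    refine Measure.ext fun B hB => ?_
    rw [Measure.map_apply measurable_snd hB, hμ _ (measurable_snd hB)]
    have hind : ∀ θ : Θ, Pinf θ {x : ℕ → X | (x, θ) ∈ Prod.snd ⁻¹' B}
        = B.indicator (fun _ => (1 : ENNReal)) θ := by
      intro θ
      by_cases hθ : θ ∈ B
      · have : {x : ℕ → X | (x, θ) ∈ Prod.snd ⁻¹' B} = Set.univ := by
          ext x; simp [hθ]
        rw [this]
        simp [hθ]
      · have : {x : ℕ → X | (x, θ) ∈ Prod.snd ⁻¹' B} = ∅ := by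
          ext x; simp [hθ]
        rw [this]
        simp [hθ]
    rw [lintegral_congr hind, lintegral_indicator_const hB, one_mul]
  have hgqint : Integrable gq μ := by
    have h1 : Integrable g (μ.map Prod.snd) := by rw [hmapsnd]; exact hgint
    exact (integrable_map_measure hgmeas.aestronglyMeasurable measurable_snd.aemeasurable).mp h1
  have hg'int : Integrable g' μ := hgqint.congr hae.symm
  -- Lévy's upward theorem
  have hconv := hg'int.tendsto_ae_condExp hg'supmeas.stronglyMeasurable
  have hcondeq : ∀ n : ℕ, μ[gq | ℱ n] =ᵐ[μ] μ[g' | ℱ n] := fun n => condExp_congr_ae hae.symm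
  have hfinal : ∀ᵐ q ∂μ, Tendsto (fun n : ℕ => (μ[gq | ℱ n]) q) atTop (𝓝 (g q.2)) := by
    filter_upwards [hconv, ae_all_iff.mpr hcondeq, hae] with q h1 h2 h3
    rw [h3] at h1
    exact Filter.Tendsto.congr (fun n => (h2 n).symm) h1
  -- the good set of parameters
  set T : Set ((ℕ → X) × Θ) :=
    {q | Tendsto (fun n : ℕ => (μ[gq | ℱ n]) q) atTop (𝓝 (g q.2))} with hT
  have hTm : MeasurableSet T := by
    have hTeq : T = {q : (ℕ → X) × Θ |
        Tendsto (fun n : ℕ => (μ[gq | ℱ n]) q - g q.2) atTop (𝓝 0)} := by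
      ext q
      exact (tendsto_sub_nhds_zero_iff).symm
    rw [hTeq]
    exact measurableSet_tendsto (𝓝 0) fun n =>
      ((stronglyMeasurable_condExp.mono (ℱ.le n)).measurable).sub (hgmeas.comp measurable_snd)
  have hTcnull : μ Tᶜ = 0 := by
    have h := hfinal
    rw [ae_iff] at h
    exact h
  have hzero : ∫⁻ θ, Pinf θ {x : ℕ → X | (x, θ) ∈ Tᶜ} ∂prior = 0 := by
    rw [← hμ _ hTm.compl]
    exact hTcnull
  -- measurability in `θ` of `θ ↦ Pinf θ A`
  set boxes : Set (Set (ℕ → X)) := {A | ∃ (k : ℕ) (B : Fin k → Set X),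
    (∀ i, MeasurableSet (B i)) ∧ A = {x : ℕ → X | ∀ i : Fin k, x (i : ℕ) ∈ B i}} with hboxes
  have hboxpi : IsPiSystem boxes := by
    rintro A₁ ⟨k₁, B₁, hB₁, rfl⟩ A₂ ⟨k₂, B₂, hB₂, rfl⟩ -
    refine ⟨max k₁ k₂, fun i =>
      (if h : (i : ℕ) < k₁ then B₁ ⟨i, h⟩ else Set.univ) ∩
      (if h : (i : ℕ) < k₂ then B₂ ⟨i, h⟩ else Set.univ), ?_, ?_⟩
    · intro i
      show MeasurableSet ((if h : (i : ℕ) < k₁ then B₁ ⟨i, h⟩ else Set.univ) ∩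
        (if h : (i : ℕ) < k₂ then B₂ ⟨i, h⟩ else Set.univ))
      refine MeasurableSet.inter ?_ ?_
      · split_ifs with h
        · exact hB₁ _
        · exact MeasurableSet.univ
      · split_ifs with h
        · exact hB₂ _
        · exact MeasurableSet.univ
    · ext x
      simp only [Set.mem_inter_iff, Set.mem_setOf_eq]
      constructor
      · rintro ⟨h1, h2⟩ i
        constructor
        · by_cases h : (i : ℕ) < k₁
          · rw [dif_pos h]
            exact h1 ⟨i, h⟩
          · rw [dif_neg h]; trivial
        · by_cases h : (i : ℕ) < k₂
          · rw [dif_pos h]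
            exact h2 ⟨i, h⟩
          · rw [dif_neg h]; trivial
      · intro h
        constructor
        · intro i
          have hi : (i : ℕ) < max k₁ k₂ := lt_of_lt_of_le i.isLt (le_max_left _ _)
          have := (h ⟨i, hi⟩).1
          rw [dif_pos (show ((⟨(i : ℕ), hi⟩ : Fin (max k₁ k₂)) : ℕ) < k₁ from i.isLt)] at this
          simpa using this
        · intro i
          have hi : (i : ℕ) < max k₁ k₂ := lt_of_lt_of_le i.isLt (le_max_right _ _)
          have := (h ⟨i, hi⟩).2
          rw [dif_pos (show ((⟨(i : ℕ), hi⟩ : Fin (max k₁ k₂)) : ℕ) < k₂ from i.isLt)] at this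
          simpa using this
  have hboxgen : (inferInstance : MeasurableSpace (ℕ → X))
      = MeasurableSpace.generateFrom boxes := by
    refine le_antisymm ?_ (MeasurableSpace.generateFrom_le ?_)
    · have hle : ∀ i : ℕ, MeasurableSpace.comap (fun x : ℕ → X => x i)
          inferInstance ≤ MeasurableSpace.generateFrom boxes := by
        intro i
        refine measurable_iff_comap_le.mp ?_
        intro A hA
        refine MeasurableSpace.measurableSet_generateFrom
          ⟨i + 1, fun j => if (j : ℕ) = i then A else Set.univ, fun j => ?_,
            (box_single i A).symm⟩
        show MeasurableSet (if (j : ℕ) = i then A else Set.univ)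
        split_ifs
        exacts [hA, MeasurableSet.univ]
      exact iSup_le hle
    · rintro A ⟨k, B, hB, rfl⟩
      have hsetA : {x : ℕ → X | ∀ i : Fin k, x (i : ℕ) ∈ B i}
          = ⋂ i : Fin k, (fun x : ℕ → X => x (i : ℕ)) ⁻¹' B i := by
        ext x; simp
      rw [hsetA]
      exact MeasurableSet.iInter fun i => measurable_pi_apply _ (hB i)
  have hPinfmeas : ∀ A : Set (ℕ → X), MeasurableSet A → Measurable fun θ => Pinf θ A := by
    have hemp : Measurable fun θ => Pinf θ (∅ : Set (ℕ → X)) := by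
      simp only [measure_empty]
      exact measurable_const
    have hbasic : ∀ A ∈ boxes, Measurable fun θ => Pinf θ A := by
      rintro A ⟨k, B, hB, rfl⟩
      have heq : (fun θ => Pinf θ {x : ℕ → X | ∀ i : Fin k, x (i : ℕ) ∈ B i})
          = fun θ => ∏ i : Fin k, P θ (B i) := funext fun θ => hPinf θ k B hB
      rw [heq]
      exact Finset.measurable_prod _ fun i _ => hP _ (hB i)
    have hcompl : ∀ t : Set (ℕ → X), MeasurableSet t →
        (Measurable fun θ => Pinf θ t) → Measurable fun θ => Pinf θ tᶜ := by
      intro t ht hm'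
      have heq : (fun θ => Pinf θ tᶜ) = fun θ => 1 - Pinf θ t := funext fun θ => by
        rw [measure_compl ht (measure_ne_top _ _), measure_univ]
      rw [heq]
      exact measurable_const.sub hm'
    have hunion : ∀ f : ℕ → Set (ℕ → X), Pairwise (Function.onFun Disjoint f) →
        (∀ i, MeasurableSet (f i)) → (∀ i, Measurable fun θ => Pinf θ (f i)) →
        Measurable fun θ => Pinf θ (⋃ i, f i) := by
      intro f hd hm hC
      have heq : (fun θ => Pinf θ (⋃ i, f i)) = fun θ => ∑' i, Pinf θ (f i) :=
        funext fun θ => measure_iUnion hd hm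
      rw [heq]
      exact Measurable.ennreal_tsum hC
    intro A hA
    exact MeasurableSpace.induction_on_inter hboxgen hboxpi hemp hbasic hcompl hunion A hA
  -- kernel measurability of the bad-set probability
  set κ : ProbabilityTheory.Kernel Θ (ℕ → X) :=
    ⟨fun θ => Pinf θ, Measure.measurable_of_measurable_coe _ hPinfmeas⟩ with hκ
  haveI : ProbabilityTheory.IsMarkovKernel κ := ⟨fun θ => by
    change IsProbabilityMeasure (Pinf θ); infer_instance⟩
  have hfmeas : Measurable fun θ => Pinf θ {x : ℕ → X | (x, θ) ∈ Tᶜ} := by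
    have hsw : MeasurableSet ((fun p : Θ × (ℕ → X) => (p.2, p.1)) ⁻¹' Tᶜ) :=
      (measurable_snd.prodMk measurable_fst) hTm.compl
    exact ProbabilityTheory.Kernel.measurable_kernel_prodMk_left (κ := κ) hsw
  have hf0 : ∀ᵐ θ ∂prior, Pinf θ {x : ℕ → X | (x, θ) ∈ Tᶜ} = 0 := by
    have := (lintegral_eq_zero_iff hfmeas).mp hzero
    filter_upwards [this] with θ hθ
    exact hθ
  refine ⟨(fun θ => Pinf θ {x : ℕ → X | (x, θ) ∈ Tᶜ}) ⁻¹' {0},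
    hfmeas (measurableSet_singleton 0), ?_, ?_⟩
  · rw [← prob_compl_eq_zero_iff (hfmeas (measurableSet_singleton 0))]
    have hceq : ((fun θ => Pinf θ {x : ℕ → X | (x, θ) ∈ Tᶜ}) ⁻¹' {0})ᶜ
        = {θ | ¬ Pinf θ {x : ℕ → X | (x, θ) ∈ Tᶜ} = 0} := by
      ext θ; simp
    rw [hceq]
    rw [ae_iff] at hf0
    exact hf0
  · intro θ₀ hθ₀
    have hθ₀' : Pinf θ₀ {x : ℕ → X | (x, θ₀) ∈ Tᶜ} = 0 := hθ₀
    rw [ae_iff]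
    exact hθ₀'
end

section
/- (Measurable recovery) There exists a measurable function f : X^∞ → Θ and a measurable set F ∈ 𝒜^∞ ⊗ ℬ with μ(F) = 1 such that f(x) = θ for all (x, θ) ∈ F. In other words, the true parameter θ can be recovered from the infinite data sequence by a measurable function, μ-almost everywhere. -/
open MeasureTheory Filter Topology

/-- **Measurable recovery.** There exists a measurable `f : X^∞ → Θ` and a measurable
set `F` with `μ(F) = 1` such that `f(x) = θ` for all `(x, θ) ∈ F`. -/
theorem measurable_recovery
    {X Θ : Type*} [MeasurableSpace X] [StandardBorelSpace X]
    [MeasurableSpace Θ] [StandardBorelSpace Θ]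
    (P : Θ → Measure X) [∀ θ, IsProbabilityMeasure (P θ)]
    (hP : ∀ A : Set X, MeasurableSet A → Measurable fun θ => P θ A)
    (hident : ∀ θ θ' : Θ, θ ≠ θ' → P θ ≠ P θ')
    (prior : Measure Θ) [IsProbabilityMeasure prior]
    (Pinf : Θ → Measure (ℕ → X)) [∀ θ, IsProbabilityMeasure (Pinf θ)]
    (hPinf : ∀ (θ : Θ) (k : ℕ) (A : Fin k → Set X), (∀ i, MeasurableSet (A i)) →
      Pinf θ {x : ℕ → X | ∀ i : Fin k, x (i : ℕ) ∈ A i} = ∏ i, P θ (A i))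
    (μ : Measure ((ℕ → X) × Θ)) [IsProbabilityMeasure μ]
    (hμ : ∀ E : Set ((ℕ → X) × Θ), MeasurableSet E →
      μ E = ∫⁻ θ, Pinf θ {x | (x, θ) ∈ E} ∂prior) :
    ∃ f : (ℕ → X) → Θ, Measurable f ∧
      ∃ F : Set ((ℕ → X) × Θ), MeasurableSet F ∧ μ F = 1 ∧
        ∀ p ∈ F, f p.1 = p.2 := by
  classical
  -- a countable generating sequence for the σ-algebra of X
  obtain ⟨s, hs⟩ : ∃ s : ℕ → Set X, MeasurableSpace.countableGeneratingSet X = Set.range s :=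
    (MeasurableSpace.countable_countableGeneratingSet (α := X)).exists_eq_range
      MeasurableSpace.nonempty_countableGeneratingSet
  have hs_meas : ∀ n, MeasurableSet (s n) := fun n =>
    MeasurableSpace.measurableSet_countableGeneratingSet (hs ▸ Set.mem_range_self n)
  have hs_gen : MeasurableSpace.generateFrom (Set.range s) = ‹MeasurableSpace X› := by
    rw [← hs]; exact MeasurableSpace.generateFrom_countableGeneratingSet
  -- the π-system of finite intersections
  set B : Finset ℕ → Set X := fun t => ⋂ i ∈ t, s i with hB_def
  have hB_meas : ∀ t, MeasurableSet (B t) := fun t =>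
    Finset.measurableSet_biInter t fun i _ => hs_meas i
  have hB_pi : IsPiSystem (Set.range B) := by
    rintro u ⟨t, rfl⟩ v ⟨t', rfl⟩ -
    refine ⟨t ∪ t', ?_⟩
    simp only [hB_def]
    ext x
    simp [Finset.mem_union, or_imp, forall_and]
  have hB_gen : MeasurableSpace.generateFrom (Set.range B) = ‹MeasurableSpace X› := by
    refine le_antisymm (MeasurableSpace.generateFrom_le ?_) ?_
    · rintro u ⟨t, rfl⟩; exact hB_meas t
    · rw [← hs_gen]
      refine MeasurableSpace.generateFrom_le ?_
      rintro u ⟨i, rfl⟩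
      refine MeasurableSpace.measurableSet_generateFrom ⟨{i}, ?_⟩
      simp [hB_def]
  -- measures are determined by their values on the π-system
  have key : ∀ θ θ' : Θ, (∀ t, P θ (B t) = P θ' (B t)) → P θ = P θ' := by
    intro θ θ' h
    refine ext_of_generate_finite _ hB_gen.symm hB_pi ?_ (by simp)
    rintro u ⟨t, rfl⟩; exact h t
  -- marginals
  have hmarg : ∀ (θ : Θ) (i : ℕ) (A : Set X), MeasurableSet A →
      Pinf θ ((fun x : ℕ → X => x i) ⁻¹' A) = P θ A := by
    intro θ i A hA
    have h := hPinf θ (i + 1) (fun m => if (m : ℕ) = i then A else Set.univ)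
      (fun m => by by_cases hm : (m : ℕ) = i <;> simp [hm, hA])
    have hset : {x : ℕ → X | ∀ m : Fin (i + 1),
        x (m : ℕ) ∈ (if (m : ℕ) = i then A else Set.univ)} = (fun x : ℕ → X => x i) ⁻¹' A := by
      ext x
      simp only [Set.mem_setOf_eq, Set.mem_preimage]
      constructor
      · intro hx
        have := hx ⟨i, Nat.lt_succ_self i⟩
        simpa using this
      · intro hx m
        by_cases hm : (m : ℕ) = i
        · rw [if_pos hm, hm]; exact hx
        · simp [hm]
    rw [hset] at h
    rw [h, Finset.prod_eq_single (⟨i, Nat.lt_succ_self i⟩ : Fin (i + 1))]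
    · simp
    · intro b _ hb
      have hb' : (b : ℕ) ≠ i := fun hbi => hb (Fin.ext hbi)
      simp [hb']
    · simp
  -- pairwise products
  have hpair : ∀ (θ : Θ) (i j : ℕ), i ≠ j → ∀ A A' : Set X, MeasurableSet A →
      MeasurableSet A' →
      Pinf θ ((fun x : ℕ → X => x i) ⁻¹' A ∩ (fun x : ℕ → X => x j) ⁻¹' A')
        = P θ A * P θ A' := by
    intro θ i j hij A A' hA hA'
    set k : ℕ := max i j + 1 with hk
    have hik : i < k := Nat.lt_succ_of_le (le_max_left i j)
    have hjk : j < k := Nat.lt_succ_of_le (le_max_right i j)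
    set C : Fin k → Set X := fun m =>
      if (m : ℕ) = i then A else if (m : ℕ) = j then A' else Set.univ with hC
    have hCm : ∀ m, MeasurableSet (C m) := fun m => by
      simp only [hC]; split
      · exact hA
      · split
        · exact hA'
        · exact MeasurableSet.univ
    have h := hPinf θ k C hCm
    have hset : {x : ℕ → X | ∀ m : Fin k, x (m : ℕ) ∈ C m}
        = (fun x : ℕ → X => x i) ⁻¹' A ∩ (fun x : ℕ → X => x j) ⁻¹' A' := by
      ext x
      simp only [Set.mem_setOf_eq, Set.mem_inter_iff, Set.mem_preimage]
      constructor
      · intro hx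
        constructor
        · have := hx ⟨i, hik⟩; simpa [hC] using this
        · have := hx ⟨j, hjk⟩
          simpa [hC, Ne.symm hij] using this
      · rintro ⟨hxi, hxj⟩ m
        simp only [hC]
        by_cases hm : (m : ℕ) = i
        · rw [if_pos hm, hm]; exact hxi
        · rw [if_neg hm]
          by_cases hm' : (m : ℕ) = j
          · rw [if_pos hm', hm']; exact hxj
          · simp [hm']
    rw [hset] at h
    rw [h]
    set ia : Fin k := ⟨i, hik⟩
    set ib : Fin k := ⟨j, hjk⟩
    have hab : ib ≠ ia := fun hh => hij (congrArg Fin.val hh).symm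
    rw [← Finset.mul_prod_erase Finset.univ _ (Finset.mem_univ ia),
      ← Finset.mul_prod_erase _ _ (Finset.mem_erase.2 ⟨hab, Finset.mem_univ ib⟩)]
    have h1 : P θ (C ia) = P θ A := by simp [hC, ia]
    have h2 : P θ (C ib) = P θ A' := by
      have : (ib : ℕ) ≠ i := fun hh => hij hh.symm
      simp [hC, ib, this]
    have h3 : ∏ m ∈ (Finset.univ.erase ia).erase ib, P θ (C m) = 1 := by
      refine Finset.prod_eq_one fun m hm => ?_
      rw [Finset.mem_erase, Finset.mem_erase] at hm
      have hmi : (m : ℕ) ≠ i := fun hh => hm.2.1 (Fin.ext hh)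
      have hmj : (m : ℕ) ≠ j := fun hh => hm.1 (Fin.ext hh)
      simp [hC, hmi, hmj]
    rw [h1, h2, h3, mul_one]
  -- the strong law of large numbers for the indicator of `B t`
  have hslln : ∀ (θ : Θ) (t : Finset ℕ), ∀ᵐ x ∂Pinf θ,
      Tendsto (fun n : ℕ => (∑ i ∈ Finset.range n,
          (B t).indicator (fun _ => (1 : ℝ)) (x i)) / n) atTop
        (𝓝 ((P θ (B t)).toReal)) := by
    intro θ t
    set φ : X → ℝ := (B t).indicator (fun _ => (1 : ℝ)) with hφ
    have hφm : Measurable φ := measurable_const.indicator (hB_meas t)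
    set Y : ℕ → (ℕ → X) → ℝ := fun i x => φ (x i) with hY
    have hY0 : Y 0 = Set.indicator ((fun x : ℕ → X => x 0) ⁻¹' B t) (fun _ => (1 : ℝ)) := by
      ext x
      simp [hY, hφ, Set.indicator_apply]
    have hint : Integrable (Y 0) (Pinf θ) := by
      rw [hY0]
      exact (integrable_const 1).indicator ((hB_meas t).preimage (measurable_pi_apply 0))
    have hindep : Pairwise (Function.onFun (ProbabilityTheory.IndepFun · · (Pinf θ)) Y) := by
      intro i j hij
      have hev : ProbabilityTheory.IndepFun (fun x : ℕ → X => x i) (fun x : ℕ → X => x j) (Pinf θ) := by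
        rw [ProbabilityTheory.indepFun_iff_measure_inter_preimage_eq_mul]
        intro A A' hA hA'
        rw [hpair θ i j hij A A' hA hA', hmarg θ i A hA, hmarg θ j A' hA']
      exact hev.comp hφm hφm
    have hid : ∀ i, ProbabilityTheory.IdentDistrib (Y i) (Y 0) (Pinf θ) (Pinf θ) := by
      intro i
      have hev : ProbabilityTheory.IdentDistrib (fun x : ℕ → X => x i)
          (fun x : ℕ → X => x 0) (Pinf θ) (Pinf θ) := by
        refine ⟨(measurable_pi_apply i).aemeasurable, (measurable_pi_apply 0).aemeasurable, ?_⟩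
        ext A hA
        rw [Measure.map_apply (measurable_pi_apply i) hA,
          Measure.map_apply (measurable_pi_apply 0) hA, hmarg θ i A hA, hmarg θ 0 A hA]
      exact hev.comp hφm
    have hE : (∫ x, Y 0 x ∂Pinf θ) = (P θ (B t)).toReal := by
      rw [hY0, integral_indicator_const (1 : ℝ)
        ((hB_meas t).preimage (measurable_pi_apply 0)), measureReal_def, hmarg θ 0 (B t) (hB_meas t)]
      simp
    have := ProbabilityTheory.strong_law_ae_real Y hint hindep hid
    rwa [hE] at this
  -- the limit functional
  set L : (ℕ → X) → Finset ℕ → ENNReal := fun x t => Filter.limsup (fun n : ℕ =>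
    ENNReal.ofReal ((∑ i ∈ Finset.range n, (B t).indicator (fun _ => (1 : ℝ)) (x i)) / n))
    atTop with hL
  have hLm : Measurable L := by
    refine measurable_pi_lambda _ fun t => Measurable.limsup fun n => ?_
    refine ENNReal.measurable_ofReal.comp ?_
    refine Measurable.div_const ?_ _
    exact Finset.measurable_sum _ fun i _ =>
      (measurable_const.indicator (hB_meas t)).comp (measurable_pi_apply i)
  -- the injective measurable map from parameters
  set g : Θ → Finset ℕ → ENNReal := fun θ t => P θ (B t) with hg
  have hgm : Measurable g := measurable_pi_lambda _ fun t => hP (B t) (hB_meas t)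
  have hginj : Function.Injective g := by
    intro θ θ' hθ
    by_contra hne
    exact hident θ θ' hne (key θ θ' fun t => congrFun hθ t)
  have hemb : MeasurableEmbedding g := hgm.measurableEmbedding hginj
  have hΘ : Nonempty Θ := by
    by_contra hh
    rw [not_nonempty_iff] at hh
    have h1 : prior Set.univ = 1 := measure_univ
    rw [Set.univ_eq_empty_iff.2 (by infer_instance), measure_empty] at h1
    exact zero_ne_one h1
  obtain ⟨h, hhm, hh⟩ := hemb.exists_measurable_extend measurable_id fun _ => hΘ
  refine ⟨h ∘ L, hhm.comp hLm, ?_⟩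
  -- a.e. recovery for each θ
  have hfae : ∀ θ : Θ, ∀ᵐ x ∂Pinf θ, h (L x) = θ := by
    intro θ
    have hall : ∀ᵐ x ∂Pinf θ, ∀ t : Finset ℕ,
        Tendsto (fun n : ℕ => (∑ i ∈ Finset.range n,
            (B t).indicator (fun _ => (1 : ℝ)) (x i)) / n) atTop
          (𝓝 ((P θ (B t)).toReal)) := (ae_all_iff).2 fun t => hslln θ t
    filter_upwards [hall] with x hx
    have hLx : L x = g θ := by
      funext t
      have h1 := ENNReal.tendsto_ofReal (hx t)
      have h2 : L x t = ENNReal.ofReal ((P θ (B t)).toReal) := h1.limsup_eq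
      rw [h2, ENNReal.ofReal_toReal (measure_ne_top _ _)]
    rw [hLx]
    have := congrFun hh θ
    simpa using this
  -- the recovery set
  refine ⟨{p : (ℕ → X) × Θ | h (L p.1) = p.2}, ?_, ?_, fun p hp => hp⟩
  · letI := upgradeStandardBorel Θ
    exact ((hhm.comp hLm).comp measurable_fst).stronglyMeasurable.measurableSet_eq_fun
      measurable_snd.stronglyMeasurable
  · have hFm : MeasurableSet {p : (ℕ → X) × Θ | h (L p.1) = p.2} := by
      letI := upgradeStandardBorel Θ
      exact ((hhm.comp hLm).comp measurable_fst).stronglyMeasurable.measurableSet_eq_fun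
        measurable_snd.stronglyMeasurable
    rw [hμ _ hFm]
    have hone : ∀ θ : Θ, Pinf θ {x | (x, θ) ∈ {p : (ℕ → X) × Θ | h (L p.1) = p.2}} = 1 := by
      intro θ
      have hmeas : MeasurableSet {x : ℕ → X | h (L x) = θ} :=
        (hhm.comp hLm) (measurableSet_singleton θ)
      exact (mem_ae_iff_prob_eq_one hmeas).1 (hfae θ)
    simp only [hone]
    simp
end

section
/- Let g : Θ → ℝ be measurable with ∫_Θ |g(θ)| dΠ(θ) < ∞, and suppose f : X^∞ → Θ is measurable and satisfies f(x) = θ for μ-almost every (x, θ). Let h = g ∘ f. Then the function (x, θ) ↦ h(x) is a version of the conditional expectation of (x, θ) ↦ g(θ) under μ given the sub-σ-algebra σ(X) = {A × Θ : A ∈ 𝒜^∞}; consequently E_μ[g(θ) | σ(X)] = g(θ) holds μ-almost surely. -/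
open MeasureTheory Filter Topology

/-- If `f : X^∞ → Θ` is measurable with `f(x) = θ` for `μ`-almost every `(x, θ)`, and
`h = g ∘ f`, then `(x, θ) ↦ h(x)` is a version of the conditional expectation of
`(x, θ) ↦ g(θ)` given `σ(X)` (it is `σ(X)`-measurable, its integrals over `σ(X)`-sets
agree with those of `g(θ)`, and it agrees a.e. with the conditional expectation);
consequently `E_μ[g(θ) | σ(X)] = g(θ)` holds `μ`-almost surely. -/
theorem condexp_version_of_recovery
    {X Θ : Type*} [MeasurableSpace X] [StandardBorelSpace X]
    [MeasurableSpace Θ] [StandardBorelSpace Θ]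
    (P : Θ → Measure X) [∀ θ, IsProbabilityMeasure (P θ)]
    (hP : ∀ A : Set X, MeasurableSet A → Measurable fun θ => P θ A)
    (prior : Measure Θ) [IsProbabilityMeasure prior]
    (Pinf : Θ → Measure (ℕ → X)) [∀ θ, IsProbabilityMeasure (Pinf θ)]
    (hPinf : ∀ (θ : Θ) (k : ℕ) (A : Fin k → Set X), (∀ i, MeasurableSet (A i)) →
      Pinf θ {x : ℕ → X | ∀ i : Fin k, x (i : ℕ) ∈ A i} = ∏ i, P θ (A i))
    (μ : Measure ((ℕ → X) × Θ)) [IsProbabilityMeasure μ]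
    (hμ : ∀ E : Set ((ℕ → X) × Θ), MeasurableSet E →
      μ E = ∫⁻ θ, Pinf θ {x | (x, θ) ∈ E} ∂prior)
    (g : Θ → ℝ) (hgmeas : Measurable g) (hgint : Integrable g prior)
    (f : (ℕ → X) → Θ) (hfmeas : Measurable f)
    (hf : ∀ᵐ p ∂μ, f p.1 = p.2)
    -- the sub-σ-algebra `σ(X) = {A × Θ : A ∈ 𝒜^∞}`
    (σX : MeasurableSpace ((ℕ → X) × Θ))
    (hσX : σX = MeasurableSpace.comap (Prod.fst : (ℕ → X) × Θ → (ℕ → X))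
      inferInstance) :
    Measurable[σX] (fun p : (ℕ → X) × Θ => g (f p.1)) ∧
    (∀ s : Set ((ℕ → X) × Θ), MeasurableSet[σX] s →
      ∫ p in s, g (f p.1) ∂μ = ∫ p in s, g p.2 ∂μ) ∧
    (fun p : (ℕ → X) × Θ => g (f p.1)) =ᵐ[μ] μ[fun p : (ℕ → X) × Θ => g p.2 | σX] ∧
    μ[fun p : (ℕ → X) × Θ => g p.2 | σX] =ᵐ[μ] fun p : (ℕ → X) × Θ => g p.2 := by
  subst hσX
  have hle : MeasurableSpace.comap (Prod.fst : (ℕ → X) × Θ → (ℕ → X)) inferInstance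
      ≤ Prod.instMeasurableSpace := measurable_fst.comap_le
  -- pushforward of μ by snd is prior
  have hmap : μ.map Prod.snd = prior := by
    ext B hB
    rw [Measure.map_apply measurable_snd hB, hμ _ (measurable_snd hB)]
    have heq : ∀ θ, Pinf θ {x : ℕ → X | (x, θ) ∈ Prod.snd ⁻¹' B}
        = B.indicator (fun _ => 1) θ := by
      intro θ
      by_cases hθ : θ ∈ B
      · have h1 : {x : ℕ → X | (x, θ) ∈ Prod.snd ⁻¹' B} = Set.univ := by
          ext x; simp [hθ]
        rw [h1, Set.indicator_of_mem hθ]; simp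
      · have h1 : {x : ℕ → X | (x, θ) ∈ Prod.snd ⁻¹' B} = ∅ := by
          ext x; simp [hθ]
        rw [h1, Set.indicator_of_notMem hθ]; simp
    rw [lintegral_congr heq, lintegral_indicator hB _]
    simp
  have hg2 : Integrable (fun p : (ℕ → X) × Θ => g p.2) μ := by
    have := hgint
    rw [← hmap] at this
    exact (integrable_map_measure hgmeas.aestronglyMeasurable measurable_snd.aemeasurable).mp this
  have hae : (fun p : (ℕ → X) × Θ => g (f p.1)) =ᵐ[μ] fun p => g p.2 :=
    hf.mono fun p hp => by simp [hp]
  have hmeasσ : Measurable[MeasurableSpace.comap (Prod.fst : (ℕ → X) × Θ → (ℕ → X))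
      inferInstance] (fun p : (ℕ → X) × Θ => g (f p.1)) :=
    (hgmeas.comp hfmeas).comp (Measurable.of_comap_le le_rfl)
  have hg1 : Integrable (fun p : (ℕ → X) × Θ => g (f p.1)) μ := hg2.congr hae.symm
  have hset : ∀ s : Set ((ℕ → X) × Θ),
      MeasurableSet[MeasurableSpace.comap (Prod.fst : (ℕ → X) × Θ → (ℕ → X)) inferInstance] s →
      ∫ p in s, g (f p.1) ∂μ = ∫ p in s, g p.2 ∂μ := fun s _ =>
    integral_congr_ae (ae_restrict_of_ae hae)
  haveI : SigmaFinite (μ.trim hle) := by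
    have : IsFiniteMeasure (μ.trim hle) := isFiniteMeasure_trim hle
    infer_instance
  have hcond : (fun p : (ℕ → X) × Θ => g (f p.1))
      =ᵐ[μ] μ[fun p : (ℕ → X) × Θ => g p.2 |
        MeasurableSpace.comap (Prod.fst : (ℕ → X) × Θ → (ℕ → X)) inferInstance] := by
    refine ae_eq_condExp_of_forall_setIntegral_eq hle hg2
      (fun s hs _ => hg1.integrableOn) (fun s hs _ => hset s hs) ?_
    exact StronglyMeasurable.aestronglyMeasurable (Measurable.stronglyMeasurable hmeasσ)
  exact ⟨hmeasσ, hset, hcond, (hcond.symm.trans hae : _)⟩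
end
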